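/- The Atiyah–Bott ρ-invariant distinguishes L_5(1,1) from L_5(2,3): for ζ = exp(2πi/5), there exists g ∈ {1,2,3,4} with ((ζ^g+1)/(ζ^g−1))² ≠ ((ζ^{2g}+1)/(ζ^{2g}−1))((ζ^{3g}+1)/(ζ^{3g}−1)) for all relabelings g ↦ ug by units u mod 5. -/
import Mathlib


open Complex

private lemma case_aux (ζ : ℂ)
    (b c : ℕ) (hb : ζ ^ b - 1 ≠ 0) (hc : ζ ^ c - 1 ≠ 0) (h1 : ζ ^ 1 - 1 ≠ 0)
    (key : (ζ ^ 1 + 1) ^ 2 * ((ζ ^ b - 1) * (ζ ^ c - 1)) =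
        (ζ ^ b + 1) * (ζ ^ c + 1) * (ζ ^ 1 - 1) ^ 2 → False) :
    ¬ ((ζ ^ 1 + 1) / (ζ ^ 1 - 1)) ^ 2 =
      (ζ ^ b + 1) / (ζ ^ b - 1) * ((ζ ^ c + 1) / (ζ ^ c - 1)) := by
  intro h
  rw [div_pow, div_mul_div_comm, div_eq_div_iff (pow_ne_zero _ h1) (mul_ne_zero hb hc)] at h
  exact key h

/-- The Atiyah–Bott ρ-invariant distinguishes `L_5(1,1)` from `L_5(2,3)`:
for `ζ = exp(2πi/5)` there exists a nontrivial `g ∈ ℤ/5` such that for every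
unit relabeling `u`, the ρ-value `((ζ^g+1)/(ζ^g−1))²` of `L_5(1,1)` at `g`
differs from the ρ-value `((ζ^{2ug}+1)/(ζ^{2ug}−1))·((ζ^{3ug}+1)/(ζ^{3ug}−1))`
of `L_5(2,3)` at `ug`. -/
theorem rho_invariant_distinguishes :
    ∀ ζ : ℂ, ζ = Complex.exp (2 * Real.pi * I / 5) →
    ∃ g : (ZMod 5)ˣ, ∀ u : (ZMod 5)ˣ,
      ((ζ ^ ((g : ZMod 5)).val + 1) / (ζ ^ ((g : ZMod 5)).val - 1)) ^ 2 ≠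
        ((ζ ^ ((2 * (u * g : ZMod 5)) : ZMod 5).val + 1) /
            (ζ ^ ((2 * (u * g : ZMod 5)) : ZMod 5).val - 1)) *
          ((ζ ^ ((3 * (u * g : ZMod 5)) : ZMod 5).val + 1) /
            (ζ ^ ((3 * (u * g : ZMod 5)) : ZMod 5).val - 1)) := by
  intro ζ hζ
  -- ζ^k ≠ 1 for 0 < k < 5
  have hne : ∀ k : ℕ, 0 < k → k < 5 → ζ ^ k ≠ 1 := by
    intro k hk0 hk5 h
    rw [hζ, ← Complex.exp_nat_mul, Complex.exp_eq_one_iff] at h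
    obtain ⟨n, hn⟩ := h
    have h2 : (2 * (Real.pi : ℂ) * I / 5) ≠ 0 := by
      simp [Real.pi_ne_zero, I_ne_zero]
    have hkn : (k : ℂ) = 5 * n := by
      have : (k : ℂ) * (2 * (Real.pi : ℂ) * I / 5) = (5 * n) * (2 * (Real.pi : ℂ) * I / 5) := by
        rw [hn]; ring
      exact mul_right_cancel₀ h2 this
    have : (k : ℤ) = 5 * n := by exact_mod_cast hkn
    omega
  have h5 : ζ ^ 5 = 1 := by
    rw [hζ, ← Complex.exp_nat_mul, show ((5 : ℕ) : ℂ) * (2 * (Real.pi : ℂ) * I / 5) =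
      2 * (Real.pi : ℂ) * I by push_cast; ring, Complex.exp_two_pi_mul_I]
  have h1 : ζ ^ 1 - 1 ≠ 0 := sub_ne_zero.mpr (hne 1 (by norm_num) (by norm_num))
  have h2 : ζ ^ 2 - 1 ≠ 0 := sub_ne_zero.mpr (hne 2 (by norm_num) (by norm_num))
  have h3 : ζ ^ 3 - 1 ≠ 0 := sub_ne_zero.mpr (hne 3 (by norm_num) (by norm_num))
  have h4 : ζ ^ 4 - 1 ≠ 0 := sub_ne_zero.mpr (hne 4 (by norm_num) (by norm_num))
  have hΦ : ζ ^ 4 + ζ ^ 3 + ζ ^ 2 + ζ + 1 = 0 := by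
    have hfac : (ζ - 1) * (ζ ^ 4 + ζ ^ 3 + ζ ^ 2 + ζ + 1) = 0 := by linear_combination h5
    rcases mul_eq_zero.mp hfac with h | h
    · exact absurd (by linear_combination h) h1
    · exact h
  refine ⟨1, fun u => ?_⟩
  fin_cases u
  · show ¬ ((ζ ^ 1 + 1) / (ζ ^ 1 - 1)) ^ 2 =
      (ζ ^ 2 + 1) / (ζ ^ 2 - 1) * ((ζ ^ 3 + 1) / (ζ ^ 3 - 1))
    refine case_aux ζ 2 3 h2 h3 h1 (fun h => ?_)
    have hcontra : (1:ℂ) = 0 := by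
      linear_combination -(1/10 + ζ/10 + ζ^2/10 + ζ^3/10 : ℂ) * h +
        (1 - 3*ζ/5 - ζ^2/5 - ζ^3/5 - ζ^4/5 + 2*ζ^5/5) * hΦ
    exact one_ne_zero hcontra
  · show ¬ ((ζ ^ 1 + 1) / (ζ ^ 1 - 1)) ^ 2 =
      (ζ ^ 4 + 1) / (ζ ^ 4 - 1) * ((ζ ^ 1 + 1) / (ζ ^ 1 - 1))
    refine case_aux ζ 4 1 h4 h1 h1 (fun h => ?_)
    have hcontra : (1:ℂ) = 0 := by
      linear_combination -(3/10 + ζ/5 + ζ^2/5 + 3*ζ^3/10 : ℂ) * h +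
        (1 - 2*ζ/5 - ζ^2/5 - 3*ζ^3/5 - ζ^4/5 + 3*ζ^5/5) * hΦ
    exact one_ne_zero hcontra
  · show ¬ ((ζ ^ 1 + 1) / (ζ ^ 1 - 1)) ^ 2 =
      (ζ ^ 1 + 1) / (ζ ^ 1 - 1) * ((ζ ^ 4 + 1) / (ζ ^ 4 - 1))
    refine case_aux ζ 1 4 h1 h4 h1 (fun h => ?_)
    have hcontra : (1:ℂ) = 0 := by
      linear_combination -(3/10 + ζ/5 + ζ^2/5 + 3*ζ^3/10 : ℂ) * h +
        (1 - 2*ζ/5 - ζ^2/5 - 3*ζ^3/5 - ζ^4/5 + 3*ζ^5/5) * hΦ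
    exact one_ne_zero hcontra
  · show ¬ ((ζ ^ 1 + 1) / (ζ ^ 1 - 1)) ^ 2 =
      (ζ ^ 3 + 1) / (ζ ^ 3 - 1) * ((ζ ^ 2 + 1) / (ζ ^ 2 - 1))
    refine case_aux ζ 3 2 h3 h2 h1 (fun h => ?_)
    have hcontra : (1:ℂ) = 0 := by
      linear_combination -(1/10 + ζ/10 + ζ^2/10 + ζ^3/10 : ℂ) * h +
        (1 - 3*ζ/5 - ζ^2/5 - ζ^3/5 - ζ^4/5 + 2*ζ^5/5) * hΦ
    exact one_ne_zero hcontra
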